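/- For every integer k ≥ 0, the following identity of formal power series in q with coefficients in ℤ[z] holds: Σ_{n,s} b(n,k,s) q^n z^s = q^{k²} · ∏_{j=1}^{k} (1 + z q^j)/(1 − q^j), where b(n,k,s) is the number of basis partitions of n with Durfee square size k and signature s. -/

import Mathlib

/-!
A partition with Durfee square of size `k` is determined by the drops `u j` between
consecutive rows of the square (the last row dropping to `k`) and the multiplicities `g j` of
the parts `j + 1 ≤ k` below it. Its successive ranks are `r_i = ∑_{j ≥ i} (u j - g j)` and its
size is `k² + ∑ (j + 1) (u j + g j)`. Lowering `u j` and `g j` together keeps the ranks and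
lowers the size, while the ranks determine `(u, g)` as soon as no `j` has both `u j` and `g j`
positive; so basis partitions are exactly these separated pairs. Each size `j + 1` therefore
contributes either nothing or `m (j + 1)` cells, `m ≥ 1`, on one of two sides, only the side
below the square counting towards the signature: this is the factor
`1 + (1 + z) (q^(j+1) + q^(2(j+1)) + ⋯) = (1 + z q^(j+1)) / (1 - q^(j+1))`.
-/

open Finset
open scoped Classical

namespace BasisPartitions

/-! ### Ordinary partitions -/

/-- The parts of a partition, listed in weakly decreasing order. -/
def sparts {n : ℕ} (π : n.Partition) : List ℕ := π.parts.sort (· ≥ ·)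

/-- `conj L j` is the number of parts that are `≥ j`, i.e. the `j`-th part of the
conjugate partition (for `j ≥ 1`). -/
def conj (L : List ℕ) (j : ℕ) : ℕ := L.countP (fun b => j ≤ b)

/-- The Durfee square size: the largest `k` such that the `k`-th part is `≥ k`. -/
def durfee (L : List ℕ) : ℕ := (List.range L.length).countP (fun i => i + 1 ≤ L.getD i 0)

/-- The `(i+1)`-st successive rank `r_{i+1} = b_{i+1} - c_{i+1}` (0-indexed `i`). -/
def rank (L : List ℕ) (i : ℕ) : ℤ := (L.getD i 0 : ℤ) - (conj L (i + 1) : ℤ)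

/-- The successive rank vector `(r_1, ..., r_k)` where `k` is the Durfee square size. -/
def ranks (L : List ℕ) : List ℤ := (List.range (durfee L)).map (rank L)

/-- A basis partition: the partitioned number is minimal among all partitions having
the same successive rank vector. -/
def IsBasis {n : ℕ} (π : n.Partition) : Prop :=
  ∀ (m : ℕ) (π' : m.Partition), ranks (sparts π') = ranks (sparts π) → n ≤ m

/-- The signature: the number of distinct part sizes below the Durfee square. -/
def sig (L : List ℕ) : ℕ := ((L.drop (durfee L)).dedup).length

/-- `b(n;k)`: the number of basis partitions of `n` with Durfee square size `k`. -/
noncomputable def bCount (n k : ℕ) : ℕ :=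
  Nat.card {π : n.Partition // IsBasis π ∧ durfee (sparts π) = k}

/-- `b(n,k,s)`: the number of basis partitions of `n` with Durfee square size `k`
and signature `s`. -/
noncomputable def bCount3 (n k s : ℕ) : ℕ :=
  Nat.card {π : n.Partition // IsBasis π ∧ durfee (sparts π) = k ∧ sig (sparts π) = s}

/-- `B(n;j)`: the number of basis partitions of `n` with signature `j`. -/
noncomputable def BCount (n j : ℕ) : ℕ :=
  Nat.card {π : n.Partition // IsBasis π ∧ sig (sparts π) = j}

/-- Rogers–Ramanujan condition: exactly `k` parts, consecutive gaps `≥ 2`, last part `≥ 1`. -/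
def RR (L : List ℕ) (k : ℕ) : Prop :=
  L.length = k ∧ (∀ i, i + 1 < k → L.getD (i + 1) 0 + 2 ≤ L.getD i 0) ∧ 1 ≤ L.getD (k - 1) 0

/-- `t(π)` for a Rogers–Ramanujan partition: the number of gaps `> 2`, plus 1 if the
last part is `> 1`. -/
def tRR (L : List ℕ) (k : ℕ) : ℕ :=
  ((Finset.range (k - 1)).filter (fun i => L.getD (i + 1) 0 + 2 < L.getD i 0)).card +
    (if 1 < L.getD (k - 1) 0 then 1 else 0)

/-- Primary condition: exactly `k` parts, each part `≥ k`. -/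
def Primary (L : List ℕ) (k : ℕ) : Prop := L.length = k ∧ ∀ x ∈ L, k ≤ x

/-- `t(π)` for a primary partition: the number of strict descents, plus 1 if the
last part is `> k`. -/
def tP (L : List ℕ) (k : ℕ) : ℕ :=
  ((Finset.range (k - 1)).filter (fun i => L.getD (i + 1) 0 < L.getD i 0)).card +
    (if k < L.getD (k - 1) 0 then 1 else 0)

/-- A complete basis partition: every `j` with `1 ≤ j ≤ k-1` occurs as a part of `π_b`
(a row below the Durfee square) or as a part of `π_r` (a column length strictly to the
right of the Durfee square). -/
def IsComplete {n : ℕ} (π : n.Partition) : Prop :=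
  ∀ j : ℕ, 1 ≤ j → j < durfee (sparts π) →
    j ∈ (sparts π).drop (durfee (sparts π)) ∨
      ∃ c : ℕ, durfee (sparts π) < c ∧ conj (sparts π) c = j

/-- `b_c(n)`: the number of complete basis partitions of `n`. -/
noncomputable def bc (n : ℕ) : ℕ := Nat.card {π : n.Partition // IsBasis π ∧ IsComplete π}

/-! ### Partitions with non-repeating odd parts and their 2-modular graphs -/

/-- Partitions with non-repeating (distinct) odd parts. -/
def Pod {n : ℕ} (π : n.Partition) : Prop := ∀ x, Odd x → π.parts.count x ≤ 1

/-- The size (sum of entries) of the `c`-th column (1-indexed) of the 2-modular graph. -/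
def mcolSize (L : List ℕ) (c : ℕ) : ℕ :=
  (L.map (fun x => if 2 * c ≤ x then 2 else if x = 2 * c - 1 then 1 else 0)).sum

/-- The length (number of entries) of the `c`-th column (1-indexed) of the 2-modular graph. -/
def mcolLen (L : List ℕ) (c : ℕ) : ℕ := L.countP (fun x => 2 * c - 1 ≤ x)

/-- The number of entries in a row of the 2-modular graph recording the part `x`,
namely `⌈x/2⌉`. -/
def mrowLen (x : ℕ) : ℕ := (x + 1) / 2

/-- The 2-modular Durfee square size: the largest `k` with `⌈b_k/2⌉ ≥ k`. -/
def mdurfee (L : List ℕ) : ℕ := (List.range L.length).countP (fun i => 2 * i + 1 ≤ L.getD i 0)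

/-- The `(i+1)`-st 2-modular successive rank: (size of row `i+1`) − (size of column `i+1`). -/
def mrank (L : List ℕ) (i : ℕ) : ℤ := (L.getD i 0 : ℤ) - (mcolSize L (i + 1) : ℤ)

/-- The 2-modular successive rank vector. -/
def mranks (L : List ℕ) : List ℤ := (List.range (mdurfee L)).map (mrank L)

/-- A minimal basis partition in `P_{o,d}`: the partitioned number is minimal among all
partitions with non-repeating odd parts having the same 2-modular successive rank vector. -/
def MinBasis {n : ℕ} (μ : n.Partition) : Prop :=
  Pod μ ∧ ∀ (m : ℕ) (μ' : m.Partition), Pod μ' →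
    mranks (sparts μ') = mranks (sparts μ) → n ≤ m

/-- A basis partition in `P_{o,d}`: no row of the 2-modular graph strictly below the Durfee
square has size equal to the size of a column strictly to the right of the Durfee square. -/
def PodBasis {n : ℕ} (π : n.Partition) : Prop :=
  Pod π ∧ ∀ i, mdurfee (sparts π) ≤ i → i < (sparts π).length →
    ∀ c, mdurfee (sparts π) < c → mcolSize (sparts π) c ≠ (sparts π).getD i 0

/-- The signature of a basis partition in `P_{o,d}`: the number of distinct sizes among the
rows of the 2-modular graph strictly below the Durfee square. -/
def msig (L : List ℕ) : ℕ := ((L.drop (mdurfee L)).dedup).length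

/-- The ℓ-signature: the number of distinct lengths among the rows of the 2-modular
graph strictly below the Durfee square. -/
def lsig (L : List ℕ) : ℕ := (((L.drop (mdurfee L)).map mrowLen).dedup).length

/-- `b(n;j)` for `P_{o,d}`: the number of basis partitions of `n` in `P_{o,d}` with
signature `j`. -/
noncomputable def podB (n j : ℕ) : ℕ := Nat.card {π : n.Partition // PodBasis π ∧ msig (sparts π) = j}

/-- The number of odd parts. -/
def numOdd (L : List ℕ) : ℕ := L.countP (fun x => x % 2 = 1)

/-- A special partition: distinct parts with consecutive differences `≥ 4`, where a
difference equal to `4` is permitted only when both parts are even. -/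
def Special (L : List ℕ) : Prop :=
  ∀ i, i + 1 < L.length →
    L.getD (i + 1) 0 + 4 ≤ L.getD i 0 ∧
      (L.getD i 0 = L.getD (i + 1) 0 + 4 → Even (L.getD i 0) ∧ Even (L.getD (i + 1) 0))

/-- The `i`-th part of a special partition, with the convention that the part just after
the last one is `-2`. -/
def hpart (L : List ℕ) (i : ℕ) : ℤ := if i < L.length then (L.getD i 0 : ℤ) else -2

/-- `ℓ(π)`: the number of gaps `> 4` in a special partition, with the convention
`h_{k+1} = -2`. -/
def ell (L : List ℕ) : ℕ :=
  ((Finset.range L.length).filter (fun i => 4 < hpart L i - hpart L (i + 1))).card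

lemma getD_antitone {L : List ℕ} (hL : L.Pairwise (· ≥ ·)) {i j : ℕ} (hij : i ≤ j) :
    L.getD j 0 ≤ L.getD i 0 := by
  rcases lt_or_ge j L.length with hj | hj
  · have hi : i < L.length := lt_of_le_of_lt hij hj
    rw [List.getD_eq_getElem _ _ hj, List.getD_eq_getElem _ _ hi]
    rcases eq_or_lt_of_le hij with rfl | h
    · exact le_rfl
    · exact hL.rel_get_of_lt (a := ⟨i, hi⟩) (b := ⟨j, hj⟩) h
  · rw [List.getD_eq_default _ _ hj]
    exact Nat.zero_le _

lemma filter_range_eq_range_countP {p : ℕ → Bool} (hp : ∀ i j, i ≤ j → p j → p i) (n : ℕ) :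
    (List.range n).filter p = List.range ((List.range n).countP p) := by
  induction n with
  | zero => simp
  | succ n ih =>
    rw [List.range_succ, List.filter_append, List.countP_append, ih]
    by_cases h : p n
    · have hall : ∀ i ∈ List.range n, p i :=
        fun i hi => hp i n (List.mem_range.mp hi).le h
      simp [h, List.countP_eq_length.mpr hall, List.range_succ]
    · simp [h]

lemma lt_durfee_iff {L : List ℕ} (hL : L.Pairwise (· ≥ ·)) {i : ℕ} :
    i < durfee L ↔ i + 1 ≤ L.getD i 0 := by
  have h := filter_range_eq_range_countP (p := fun i => decide (i + 1 ≤ L.getD i 0))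
    (fun i j hij hj => by
      simp only [decide_eq_true_eq] at hj ⊢
      exact (Nat.succ_le_succ hij).trans (hj.trans (getD_antitone hL hij))) L.length
  rw [← List.mem_range, durfee, ← h, List.mem_filter, List.mem_range, decide_eq_true_eq,
    and_iff_right_iff_imp]
  intro hi
  by_contra hlen
  rw [List.getD_eq_default _ _ (not_lt.mp hlen)] at hi
  omega

lemma durfee_le_length (L : List ℕ) : durfee L ≤ L.length :=
  List.countP_le_length.trans List.length_range.le

lemma getD_drop {α : Type*} (L : List α) (d : α) (n i : ℕ) :
    (L.drop n).getD i d = L.getD (n + i) d := by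
  simp [List.getD_eq_getElem?_getD]

def tailSum (u : ℕ → ℕ) (k i : ℕ) : ℕ := ∑ j ∈ Ico i k, u j

section tailSum

variable {u v : ℕ → ℕ} {k i : ℕ}

lemma tailSum_of_le (h : k ≤ i) : tailSum u k i = 0 := by
  rw [tailSum, Ico_eq_empty_of_le h, sum_empty]

lemma tailSum_eq_add (h : i < k) : tailSum u k i = u i + tailSum u k (i + 1) :=
  sum_eq_sum_Ico_succ_bot h u

lemma tailSum_succ_top (h : i ≤ k) : tailSum u (k + 1) i = tailSum u k i + u k :=
  sum_Ico_succ_top h u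

lemma tailSum_antitone {j : ℕ} (h : i ≤ j) : tailSum u k j ≤ tailSum u k i :=
  sum_le_sum_of_subset (Ico_subset_Ico h le_rfl)

lemma tailSum_congr (h : ∀ j < k, u j = v j) : tailSum u k i = tailSum v k i :=
  sum_congr rfl fun j hj => h j (mem_Ico.mp hj).2

lemma tailSum_mono (h : v ≤ u) : tailSum v k i ≤ tailSum u k i :=
  sum_le_sum fun j _ => h j

lemma tailSum_sub (h : v ≤ u) : tailSum (u - v) k i = tailSum u k i - tailSum v k i :=
  sum_tsub_distrib _ fun j _ => h j

lemma sum_tailSum : ∑ i ∈ range k, tailSum u k i = ∑ j ∈ range k, (j + 1) * u j := by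
  induction k with
  | zero => simp
  | succ k ih =>
    rw [sum_range_succ, sum_congr rfl fun i hi => tailSum_succ_top (mem_range.mp hi).le,
      sum_add_distrib, ih, sum_const, card_range, smul_eq_mul, tailSum_succ_top le_rfl,
      tailSum_of_le le_rfl, sum_range_succ]
    ring

end tailSum

def belowSquare : ℕ → (ℕ → ℕ) → List ℕ
  | 0, _ => []
  | k + 1, g => List.replicate (g k) (k + 1) ++ belowSquare k g

/-- The first `k` rows of a partition with Durfee square `k`, where `u j` is the drop from
row `j` to row `j + 1` (and from the last row to `k`). -/
def squareRows (k : ℕ) (u : ℕ → ℕ) : List ℕ := (List.range k).map fun i => k + tailSum u k i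

def assemble (k : ℕ) (u g : ℕ → ℕ) : List ℕ := squareRows k u ++ belowSquare k g

def belowSupport (k : ℕ) (g : ℕ → ℕ) : Finset ℕ := (range k).filter fun j => g j ≠ 0

section assemble

variable {k : ℕ} {u g : ℕ → ℕ}

lemma bounds_of_mem_belowSquare {x : ℕ} (hx : x ∈ belowSquare k g) : 1 ≤ x ∧ x ≤ k := by
  induction k with
  | zero => simp [belowSquare] at hx
  | succ k ih =>
    rcases List.mem_append.mp hx with hx | hx
    · have := List.eq_of_mem_replicate hx
      omega
    · have := ih hx
      omega

lemma count_succ_belowSquare (j : ℕ) :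
    (belowSquare k g).count (j + 1) = if j < k then g j else 0 := by
  induction k with
  | zero => simp [belowSquare]
  | succ k ih =>
    rw [belowSquare, List.count_append, List.count_replicate, ih]
    by_cases h : j = k
    · subst h
      simp
    · rw [if_neg (by simpa using Ne.symm h)]
      split_ifs <;> omega

lemma countP_belowSquare (i : ℕ) :
    (belowSquare k g).countP (fun x => i + 1 ≤ x) = tailSum g k i := by
  induction k with
  | zero => simp [belowSquare, tailSum_of_le]
  | succ k ih =>
    rw [belowSquare, List.countP_append, ih, List.countP_replicate]
    by_cases h : i ≤ k
    · rw [tailSum_succ_top h, if_pos (by simpa using h)]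
      ring
    · rw [tailSum_of_le (by omega), tailSum_of_le (by omega), if_neg (by simpa using h)]

lemma sum_belowSquare : (belowSquare k g).sum = ∑ j ∈ range k, (j + 1) * g j := by
  induction k with
  | zero => simp [belowSquare]
  | succ k ih =>
    rw [belowSquare, List.sum_append, ih, List.sum_replicate, smul_eq_mul, sum_range_succ]
    ring

lemma pairwise_belowSquare : (belowSquare k g).Pairwise (· ≥ ·) := by
  induction k with
  | zero => simp [belowSquare]
  | succ k ih =>
    refine List.pairwise_append.mpr ⟨List.pairwise_replicate.mpr (Or.inr le_rfl), ih, ?_⟩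
    intro a ha b hb
    have := List.eq_of_mem_replicate ha
    have := bounds_of_mem_belowSquare hb
    omega

lemma belowSquare_congr {g' : ℕ → ℕ} (h : ∀ j < k, g j = g' j) :
    belowSquare k g = belowSquare k g' := by
  induction k with
  | zero => rfl
  | succ k ih =>
    rw [belowSquare, belowSquare, ih fun j hj => h j (by omega), h k (by omega)]

lemma toFinset_belowSquare :
    (belowSquare k g).toFinset = (belowSupport k g).image (· + 1) := by
  ext x
  simp only [belowSupport, List.mem_toFinset, mem_image, mem_filter, mem_range]
  constructor
  · intro hx
    obtain ⟨hx1, -⟩ := bounds_of_mem_belowSquare hx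
    obtain ⟨j, rfl⟩ := Nat.exists_eq_add_of_le' hx1
    have := List.count_pos_iff.mpr hx
    rw [count_succ_belowSquare] at this
    split_ifs at this with hj
    · exact ⟨j, ⟨hj, by omega⟩, rfl⟩
    · omega
  · rintro ⟨j, ⟨hj, hg⟩, rfl⟩
    rw [← List.count_pos_iff, count_succ_belowSquare, if_pos hj]
    omega

lemma length_squareRows : (squareRows k u).length = k := by simp [squareRows]

lemma le_of_mem_squareRows {x : ℕ} (hx : x ∈ squareRows k u) : k ≤ x := by
  obtain ⟨i, -, rfl⟩ := List.mem_map.mp hx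
  omega

lemma sum_squareRows : (squareRows k u).sum = k * k + ∑ j ∈ range k, (j + 1) * u j := by
  have h : (squareRows k u).sum = ∑ i ∈ range k, (k + tailSum u k i) := rfl
  rw [h, sum_add_distrib, sum_const, card_range, smul_eq_mul, sum_tailSum]


lemma pairwise_assemble : (assemble k u g).Pairwise (· ≥ ·) := by
  refine List.pairwise_append.mpr ⟨?_, pairwise_belowSquare, ?_⟩
  · rw [squareRows, List.pairwise_map]
    exact List.pairwise_lt_range.imp fun h => Nat.add_le_add_left (tailSum_antitone h.le) k
  · intro a ha b hb
    have := le_of_mem_squareRows ha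
    have := bounds_of_mem_belowSquare hb
    omega

lemma pos_of_mem_assemble {x : ℕ} (hx : x ∈ assemble k u g) : 0 < x := by
  rcases List.mem_append.mp hx with hx | hx
  · obtain ⟨i, hi, rfl⟩ := List.mem_map.mp hx
    have := List.mem_range.mp hi
    omega
  · exact (bounds_of_mem_belowSquare hx).1

lemma sum_assemble :
    (assemble k u g).sum = k * k + ∑ j ∈ range k, (j + 1) * (u j + g j) := by
  simp only [assemble, List.sum_append, sum_squareRows, sum_belowSquare, mul_add, sum_add_distrib]
  ring

lemma getD_assemble {i : ℕ} (h : i < k) : (assemble k u g).getD i 0 = k + tailSum u k i := by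
  rw [assemble, List.getD_append _ _ _ _ (by rwa [length_squareRows])]
  simp [squareRows, List.getD_eq_getElem?_getD, h]

lemma drop_assemble : (assemble k u g).drop k = belowSquare k g :=
  List.drop_left' length_squareRows

lemma getD_assemble_le {i : ℕ} (h : k ≤ i) : (assemble k u g).getD i 0 ≤ k := by
  obtain ⟨t, rfl⟩ := Nat.exists_eq_add_of_le h
  rw [← getD_drop, drop_assemble]
  rcases lt_or_ge t (belowSquare k g).length with ht | ht
  · rw [List.getD_eq_getElem _ _ ht]
    exact (bounds_of_mem_belowSquare (List.getElem_mem ht)).2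
  · rw [List.getD_eq_default _ _ ht]
    exact Nat.zero_le k

lemma durfee_assemble : durfee (assemble k u g) = k := by
  refine eq_of_forall_lt_iff fun i => ?_
  rw [lt_durfee_iff pairwise_assemble]
  constructor
  · intro hi
    by_contra hk
    have := getD_assemble_le (u := u) (g := g) (not_lt.mp hk)
    omega
  · intro hi
    rw [getD_assemble hi]
    omega

lemma conj_assemble {i : ℕ} (h : i < k) : conj (assemble k u g) (i + 1) = k + tailSum g k i := by
  rw [conj, assemble, List.countP_append, countP_belowSquare,
    List.countP_eq_length.mpr fun x hx => ?_, length_squareRows]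
  have := le_of_mem_squareRows hx
  simp only [decide_eq_true_eq]
  omega

lemma ranks_assemble :
    ranks (assemble k u g) = (List.range k).map fun i => (tailSum u k i : ℤ) - tailSum g k i := by
  rw [ranks, durfee_assemble]
  refine List.map_congr_left fun i hi => ?_
  have hi := List.mem_range.mp hi
  rw [rank, getD_assemble hi, conj_assemble hi]
  push_cast
  ring

lemma sig_assemble : sig (assemble k u g) = #(belowSupport k g) := by
  rw [sig, durfee_assemble, drop_assemble, ← List.card_toFinset, toFinset_belowSquare,
    card_image_of_injective _ (add_left_injective 1)]

lemma assemble_congr {u' g' : ℕ → ℕ} (hu : ∀ j < k, u j = u' j) (hg : ∀ j < k, g j = g' j) :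
    assemble k u g = assemble k u' g' := by
  rw [assemble, assemble, belowSquare_congr hg, squareRows, squareRows,
    List.map_congr_left fun i _ => by rw [tailSum_congr hu]]

end assemble

def gaps (L : List ℕ) (k j : ℕ) : ℕ := L.getD j 0 - if j + 1 < k then L.getD (j + 1) 0 else k

def mults (L : List ℕ) (k j : ℕ) : ℕ := (L.drop k).count (j + 1)

lemma gaps_assemble {k : ℕ} {u g : ℕ → ℕ} {j : ℕ} (h : j < k) :
    gaps (assemble k u g) k j = u j := by
  rw [gaps, getD_assemble h, tailSum_eq_add h]
  split_ifs with hj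
  · rw [getD_assemble hj]
    omega
  · rw [tailSum_of_le (by omega)]
    omega

lemma mults_assemble {k : ℕ} {u g : ℕ → ℕ} {j : ℕ} (h : j < k) :
    mults (assemble k u g) k j = g j := by
  rw [mults, drop_assemble, count_succ_belowSquare, if_pos h]

section decompose

variable {L : List ℕ} (hL : L.Pairwise (· ≥ ·))
include hL

lemma getD_eq_add_tailSum_gaps {i : ℕ} (hi : i < durfee L) :
    L.getD i 0 = durfee L + tailSum (gaps L (durfee L)) (durfee L) i := by
  set d := durfee L
  obtain ⟨n, hn⟩ : ∃ n, i + 1 + n = d := ⟨d - (i + 1), by omega⟩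
  have hsq := (lt_durfee_iff hL).mp hi
  induction n generalizing i with
  | zero =>
    rw [tailSum_eq_add hi, tailSum_of_le (by omega), gaps, if_neg (by omega)]
    omega
  | succ n ih =>
    have hnext := ih (i := i + 1) (by omega) (by omega) ((lt_durfee_iff hL).mp (by omega))
    rw [tailSum_eq_add hi, gaps, if_pos (by omega)]
    have := getD_antitone hL (Nat.le_add_right i 1)
    omega

lemma take_durfee_eq_squareRows :
    L.take (durfee L) = squareRows (durfee L) (gaps L (durfee L)) := by
  apply List.ext_getElem
  · rw [List.length_take, length_squareRows]
    exact min_eq_left (durfee_le_length L)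
  · intro i h1 h2
    rw [length_squareRows] at h2
    rw [List.getElem_take, ← List.getD_eq_getElem _ 0, getD_eq_add_tailSum_gaps hL h2]
    simp [squareRows]

lemma le_durfee_of_mem_drop {x : ℕ} (hx : x ∈ L.drop (durfee L)) : x ≤ durfee L := by
  obtain ⟨t, ht, rfl⟩ := List.mem_iff_getElem.mp hx
  rw [← List.getD_eq_getElem _ 0, getD_drop]
  have := (lt_durfee_iff hL).not.mp (lt_irrefl _)
  have := getD_antitone hL (Nat.le_add_right (durfee L) t)
  omega

lemma drop_durfee_eq_belowSquare (hpos : ∀ x ∈ L, 0 < x) :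
    L.drop (durfee L) = belowSquare (durfee L) (mults L (durfee L)) := by
  refine List.Perm.eq_of_pairwise' (hL.sublist (List.drop_sublist _ L)) pairwise_belowSquare
    (List.perm_iff_count.mpr fun v => ?_)
  rcases v with _ | j
  · rw [List.count_eq_zero.mpr fun h => (hpos 0 (List.mem_of_mem_drop h)).false,
      List.count_eq_zero.mpr fun h => (bounds_of_mem_belowSquare h).1.not_gt Nat.zero_lt_one]
  · rw [count_succ_belowSquare]
    split_ifs with hj
    · rfl
    · exact List.count_eq_zero.mpr fun h => by
        have := le_durfee_of_mem_drop hL h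
        omega

lemma eq_assemble (hpos : ∀ x ∈ L, 0 < x) :
    L = assemble (durfee L) (gaps L (durfee L)) (mults L (durfee L)) := by
  conv_lhs => rw [← List.take_append_drop (durfee L) L]
  rw [take_durfee_eq_squareRows hL, drop_durfee_eq_belowSquare hL hpos, assemble]

end decompose

def ofList {n : ℕ} (L : List ℕ) (hpos : ∀ x ∈ L, 0 < x) (hn : L.sum = n) : n.Partition :=
  ⟨L, fun {i} hi => hpos i (by simpa using hi), by simpa using hn⟩

lemma sparts_ofList {n : ℕ} {L : List ℕ} (hL : L.Pairwise (· ≥ ·)) (hpos : ∀ x ∈ L, 0 < x)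
    (hn : L.sum = n) : sparts (ofList L hpos hn) = L :=
  List.Perm.eq_of_pairwise' (Multiset.pairwise_sort _ _) hL
    (Multiset.coe_eq_coe.mp (Multiset.sort_eq _ _))

lemma eq_of_sparts_eq {n : ℕ} {π π' : n.Partition} (h : sparts π = sparts π') : π = π' := by
  ext1
  rw [← Multiset.sort_eq π.parts (· ≥ ·), ← Multiset.sort_eq π'.parts (· ≥ ·)]
  exact congrArg _ h

section sparts

variable {n : ℕ} (π : n.Partition)

lemma pairwise_sparts : (sparts π).Pairwise (· ≥ ·) := Multiset.pairwise_sort _ _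

lemma pos_of_mem_sparts : ∀ x ∈ sparts π, 0 < x :=
  fun _ hx => π.parts_pos ((Multiset.mem_sort _).mp hx)

lemma sum_sparts : (sparts π).sum = n := by
  have h := π.parts_sum
  rwa [← Multiset.sort_eq π.parts (· ≥ ·), Multiset.sum_coe] at h

lemma sparts_eq_assemble :
    sparts π = assemble (durfee (sparts π)) (gaps (sparts π) (durfee (sparts π)))
      (mults (sparts π) (durfee (sparts π))) :=
  eq_assemble (pairwise_sparts π) (pos_of_mem_sparts π)

lemma durfee_mul_self_le : durfee (sparts π) * durfee (sparts π) ≤ n := by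
  have h := sum_sparts π
  rw [sparts_eq_assemble π, sum_assemble] at h
  omega

lemma sig_le : sig (sparts π) ≤ n :=
  calc sig (sparts π) ≤ ((sparts π).drop (durfee (sparts π))).length :=
        (List.dedup_sublist _).length_le
    _ ≤ (sparts π).length := (List.drop_sublist _ _).length_le
    _ ≤ (sparts π).sum := List.length_le_sum_of_one_le _ (pos_of_mem_sparts π)
    _ = n := sum_sparts π

end sparts

def Separated (u g : ℕ → ℕ) (k : ℕ) : Prop := ∀ j < k, u j = 0 ∨ g j = 0

section reduce

variable {k : ℕ} {u g : ℕ → ℕ}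

lemma separated_sub_inf : Separated (u - u ⊓ g) (g - u ⊓ g) k := fun j _ => by
  simp only [Pi.sub_apply, Pi.inf_apply]
  omega

/-- Lowering `u j` and `g j` together shortens each of the first `j + 1` rows and columns by
one cell. -/
lemma ranks_assemble_sub_inf :
    ranks (assemble k (u - u ⊓ g) (g - u ⊓ g)) = ranks (assemble k u g) := by
  rw [ranks_assemble, ranks_assemble]
  refine List.map_congr_left fun i _ => ?_
  rw [tailSum_sub inf_le_left, tailSum_sub inf_le_right]
  have := tailSum_mono (k := k) (i := i) (inf_le_left : u ⊓ g ≤ u)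
  have := tailSum_mono (k := k) (i := i) (inf_le_right : u ⊓ g ≤ g)
  omega

lemma sum_assemble_sub_inf :
    (assemble k (u - u ⊓ g) (g - u ⊓ g)).sum + 2 * ∑ j ∈ range k, (j + 1) * min (u j) (g j) =
      (assemble k u g).sum := by
  rw [sum_assemble, sum_assemble, add_assoc, mul_sum, ← sum_add_distrib]
  congr 1
  refine sum_congr rfl fun j _ => ?_
  have h : (u j - min (u j) (g j)) + (g j - min (u j) (g j)) + 2 * min (u j) (g j) =
      u j + g j := by omega
  simp only [Pi.sub_apply, Pi.inf_apply, ← h]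
  ring

lemma assemble_eq_of_ranks_eq {u' g' : ℕ → ℕ} (hs : Separated u g k) (hs' : Separated u' g' k)
    (h : ranks (assemble k u g) = ranks (assemble k u' g')) :
    assemble k u g = assemble k u' g' := by
  rw [ranks_assemble, ranks_assemble, List.map_inj_left] at h
  have htail : ∀ n i, k - i = n →
      tailSum u k i = tailSum u' k i ∧ tailSum g k i = tailSum g' k i := by
    intro n
    induction n with
    | zero =>
      intro i hi
      simp only [tailSum_of_le (Nat.le_of_sub_eq_zero hi), and_self]
    | succ n ih =>
      intro i hi
      have hik : i < k := by omega
      have hr := h i (List.mem_range.mpr hik)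
      obtain ⟨hu, hg⟩ := ih (i + 1) (by omega)
      rw [tailSum_eq_add hik, tailSum_eq_add (u := g) hik, tailSum_eq_add (u := u') hik,
        tailSum_eq_add (u := g') hik] at hr ⊢
      rcases hs i hik with h1 | h1 <;> rcases hs' i hik with h2 | h2 <;> omega
  have hpoint : ∀ j < k, u j = u' j ∧ g j = g' j := by
    intro j hj
    have h1 := htail _ j rfl
    have h2 := htail _ (j + 1) rfl
    rw [tailSum_eq_add hj, tailSum_eq_add (u := g) hj, tailSum_eq_add (u := u') hj,
      tailSum_eq_add (u := g') hj] at h1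
    omega
  exact assemble_congr (fun j hj => (hpoint j hj).1) (fun j hj => (hpoint j hj).2)

end reduce

/-- Passing from `(u, g)` to `(u - u ⊓ g, g - u ⊓ g)` keeps the ranks and lowers the size, and
separated data are determined by their ranks. -/
theorem isBasis_iff_separated {n : ℕ} (π : n.Partition) :
    IsBasis π ↔ Separated (gaps (sparts π) (durfee (sparts π)))
      (mults (sparts π) (durfee (sparts π))) (durfee (sparts π)) := by
  set d := durfee (sparts π)
  set u := gaps (sparts π) d
  set g := mults (sparts π) d
  have hπ : sparts π = assemble d u g := sparts_eq_assemble π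
  constructor
  · intro hb
    have hsum := sum_assemble_sub_inf (k := d) (u := u) (g := g)
    rw [← hπ, sum_sparts] at hsum
    by_contra hs
    obtain ⟨j, hj, hu, hg⟩ : ∃ j < d, u j ≠ 0 ∧ g j ≠ 0 := by
      simpa [Separated, not_or] using hs
    have hle := hb _ (ofList _ (fun _ => pos_of_mem_assemble) rfl)
      (by rw [sparts_ofList pairwise_assemble, ranks_assemble_sub_inf, ← hπ])
    have hj_le := single_le_sum (f := fun i => (i + 1) * min (u i) (g i))
      (fun _ _ => Nat.zero_le _) (mem_range.mpr hj)
    have : 0 < (j + 1) * min (u j) (g j) := Nat.mul_pos (by omega) (by omega)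
    omega
  · intro hs m π' hr
    have hd : durfee (sparts π') = d := by simpa [ranks] using congrArg List.length hr
    have hπ' := sparts_eq_assemble π'
    rw [hd] at hπ'
    set u' := gaps (sparts π') d
    set g' := mults (sparts π') d
    have hsum' := sum_assemble_sub_inf (k := d) (u := u') (g := g')
    rw [← hπ', sum_sparts] at hsum'
    have heq := assemble_eq_of_ranks_eq (u' := u' - u' ⊓ g') (g' := g' - u' ⊓ g') hs
      separated_sub_inf
      (by rw [ranks_assemble_sub_inf, ← hπ, ← hπ', hr])
    rw [← heq, ← hπ, sum_sparts] at hsum'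
    omega

/-- `l j` is the total size of the parts `j + 1` of a partition of `N` into parts `≤ k`. -/
def multipleAntidiag (k N : ℕ) : Finset (ℕ →₀ ℕ) :=
  (finsuppAntidiag (range k) N).filter fun l => ∀ j ∈ range k, (j + 1) ∣ l j

noncomputable def weights (k : ℕ) (u g : ℕ → ℕ) : ℕ →₀ ℕ :=
  Finsupp.indicator (range k) fun j _ => (j + 1) * (u j + g j)

def decodeGaps (l : ℕ →₀ ℕ) (ε : Finset ℕ) (j : ℕ) : ℕ := if j ∈ ε then 0 else l j / (j + 1)

def decodeMults (l : ℕ →₀ ℕ) (ε : Finset ℕ) (j : ℕ) : ℕ := if j ∈ ε then l j / (j + 1) else 0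

section weights

variable {k : ℕ} {u g : ℕ → ℕ}

lemma weights_apply {j : ℕ} (h : j < k) : weights k u g j = (j + 1) * (u j + g j) := by
  simp [weights, Finsupp.indicator_apply, h]

lemma sum_weights : ∑ j ∈ range k, weights k u g j = ∑ j ∈ range k, (j + 1) * (u j + g j) :=
  sum_congr rfl fun _ hj => weights_apply (mem_range.mp hj)

lemma weights_mem_multipleAntidiag :
    weights k u g ∈ multipleAntidiag k (∑ j ∈ range k, (j + 1) * (u j + g j)) := by
  refine mem_filter.mpr
    ⟨mem_finsuppAntidiag.mpr ⟨sum_weights, Finsupp.support_indicator_subset _ _⟩, fun j hj => ?_⟩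
  rw [weights_apply (mem_range.mp hj)]
  exact dvd_mul_right _ _

lemma belowSupport_subset_support : belowSupport k g ⊆ (weights k u g).support := by
  intro j hj
  obtain ⟨hj, hg⟩ := mem_filter.mp hj
  rw [Finsupp.mem_support_iff, weights_apply (mem_range.mp hj)]
  positivity

lemma weights_congr {u' g' : ℕ → ℕ} (hu : ∀ j < k, u j = u' j) (hg : ∀ j < k, g j = g' j) :
    weights k u g = weights k u' g' := by
  ext j
  simp only [weights, Finsupp.indicator_apply, mem_range]
  split_ifs with hj
  · rw [hu j hj, hg j hj]
  · rfl

lemma belowSupport_congr {g' : ℕ → ℕ} (hg : ∀ j < k, g j = g' j) :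
    belowSupport k g = belowSupport k g' :=
  filter_congr fun j hj => by rw [hg j (mem_range.mp hj)]

lemma decode_weights (hs : Separated u g k) {j : ℕ} (hj : j < k) :
    decodeGaps (weights k u g) (belowSupport k g) j = u j ∧
      decodeMults (weights k u g) (belowSupport k g) j = g j := by
  simp only [decodeGaps, decodeMults, belowSupport, mem_filter, mem_range, weights_apply hj,
    Nat.mul_div_cancel_left _ (Nat.succ_pos j), hj, true_and]
  rcases hs j hj with h | h <;> by_cases hg : g j = 0 <;> simp [h, hg]

end weights

section decode

variable {k N : ℕ} {l : ℕ →₀ ℕ} {ε : Finset ℕ}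

lemma separated_decode : Separated (decodeGaps l ε) (decodeMults l ε) k := fun j _ => by
  by_cases h : j ∈ ε <;> simp [decodeGaps, decodeMults, h]

lemma weights_decode (hl : l ∈ multipleAntidiag k N) :
    weights k (decodeGaps l ε) (decodeMults l ε) = l := by
  obtain ⟨hl, hdvd⟩ := mem_filter.mp hl
  have hsupp := (mem_finsuppAntidiag.mp hl).2
  ext j
  by_cases hj : j < k
  · rw [weights_apply hj, decodeGaps, decodeMults]
    have := Nat.mul_div_cancel' (hdvd j (mem_range.mpr hj))
    split_ifs <;> simpa
  · rw [weights, Finsupp.indicator_apply, dif_neg (by simpa using hj)]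
    exact (Finsupp.notMem_support_iff.mp fun h => hj (mem_range.mp (hsupp h))).symm

lemma belowSupport_decode (hl : l ∈ multipleAntidiag k N) (hε : ε ⊆ l.support) :
    belowSupport k (decodeMults l ε) = ε := by
  obtain ⟨hl, hdvd⟩ := mem_filter.mp hl
  have hsupp := (mem_finsuppAntidiag.mp hl).2
  ext j
  rw [belowSupport, mem_filter, mem_range]
  simp only [decodeMults]
  constructor
  · rintro ⟨-, h⟩
    by_contra hj
    exact h (if_neg hj)
  · intro hj
    have hjk := mem_range.mp (hsupp (hε hj))
    refine ⟨hjk, ?_⟩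
    rw [if_pos hj]
    intro h0
    have := Nat.mul_div_cancel' (hdvd j (mem_range.mpr hjk))
    rw [h0, mul_zero] at this
    exact Finsupp.mem_support_iff.mp (hε hj) this.symm

lemma sum_assemble_decode (hl : l ∈ multipleAntidiag k N) :
    (assemble k (decodeGaps l ε) (decodeMults l ε)).sum = k * k + N := by
  rw [sum_assemble, ← sum_weights, weights_decode hl,
    (mem_finsuppAntidiag.mp (mem_filter.mp hl).1).1]

end decode

lemma isBasis_ofList_assemble {n k : ℕ} {u g : ℕ → ℕ} (hs : Separated u g k)
    (hn : (assemble k u g).sum = n) :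
    IsBasis (ofList (assemble k u g) (fun _ => pos_of_mem_assemble) hn) := by
  rw [isBasis_iff_separated, sparts_ofList pairwise_assemble, durfee_assemble]
  intro j hj
  rw [gaps_assemble hj, mults_assemble hj]
  exact hs j hj

noncomputable def basisFinset (n k : ℕ) : Finset n.Partition :=
  univ.filter fun π => IsBasis π ∧ durfee (sparts π) = k

lemma assemble_separated_of_mem_basisFinset {n k : ℕ} {π : n.Partition}
    (hπ : π ∈ basisFinset n k) :
    sparts π = assemble k (gaps (sparts π) k) (mults (sparts π) k) ∧
      Separated (gaps (sparts π) k) (mults (sparts π) k) k := by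
  obtain ⟨hb, rfl⟩ := (mem_filter.mp hπ).2
  exact ⟨sparts_eq_assemble π, (isBasis_iff_separated π).mp hb⟩

lemma sum_bCount3_mul_pow {R : Type*} [CommSemiring R] (z : R) (n k : ℕ) :
    ∑ s ∈ range (n + 1), (bCount3 n k s : R) * z ^ s =
      ∑ π ∈ basisFinset n k, z ^ sig (sparts π) := by
  rw [← sum_fiberwise_of_maps_to (g := fun π => sig (sparts π)) (t := range (n + 1))
    fun π _ => mem_range.mpr (Nat.lt_succ_of_le (sig_le π))]
  refine sum_congr rfl fun s _ => ?_
  rw [sum_congr rfl fun π hπ => by rw [(mem_filter.mp hπ).2], sum_const, nsmul_eq_mul,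
    bCount3, Nat.card_eq_fintype_card, Fintype.card_subtype, basisFinset, filter_filter]
  simp only [and_assoc]

/-- Basis partitions with Durfee square `k` are in bijection with pairs `(l, ε)`, where `l`
records a partition of `n - k²` into parts `≤ k` and `ε` marks the part sizes placed below
the square (the others become drops between rows of the square). -/
lemma sum_basisFinset_pow_sig {R : Type*} [CommSemiring R] (z : R) {n k : ℕ} (h : k * k ≤ n) :
    ∑ π ∈ basisFinset n k, z ^ sig (sparts π) =
      ∑ x ∈ (multipleAntidiag k (n - k * k)).sigma (fun l => l.support.powerset), z ^ #x.2 := by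
  have hdata := fun π (hπ : π ∈ basisFinset n k) => assemble_separated_of_mem_basisFinset hπ
  refine sum_bij'
    (fun π _ => ⟨weights k (gaps (sparts π) k) (mults (sparts π) k),
      belowSupport k (mults (sparts π) k)⟩)
    (fun x hx => ofList (assemble k (decodeGaps x.1 x.2) (decodeMults x.1 x.2))
      (fun _ => pos_of_mem_assemble)
      ((sum_assemble_decode (mem_sigma.mp hx).1).trans (Nat.add_sub_cancel' h)))
    (fun π hπ => ?_) (fun x hx => ?_) (fun π hπ => ?_) (fun x hx => ?_) (fun π hπ => ?_)
  · have hsum := sum_sparts π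
    rw [(hdata π hπ).1, sum_assemble] at hsum
    refine mem_sigma.mpr ⟨?_, mem_powerset.mpr belowSupport_subset_support⟩
    convert weights_mem_multipleAntidiag using 2
    omega
  · exact mem_filter.mpr ⟨mem_univ _, isBasis_ofList_assemble separated_decode _,
      by rw [sparts_ofList pairwise_assemble, durfee_assemble]⟩
  · apply eq_of_sparts_eq
    obtain ⟨hπ, hs⟩ := hdata π hπ
    rw [sparts_ofList pairwise_assemble]
    exact (assemble_congr (fun j hj => (decode_weights hs hj).1)
      (fun j hj => (decode_weights hs hj).2)).trans hπ.symm
  · obtain ⟨hl, hε⟩ := mem_sigma.mp hx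
    simp only [sparts_ofList pairwise_assemble]
    rw [weights_congr (fun j hj => gaps_assemble hj) (fun j hj => mults_assemble hj),
      belowSupport_congr (fun j hj => mults_assemble hj), weights_decode hl,
      belowSupport_decode hl (mem_powerset.mp hε)]
  · rw [(hdata π hπ).1, sig_assemble, ← (hdata π hπ).1]

section PowerSeries

open PowerSeries

variable {K : Type*} [Field K]

lemma coeff_one_add_C_mul_X_mul_mk_one (z : K) (t : ℕ) :
    coeff t ((1 + C z * X) * PowerSeries.mk 1 : K⟦X⟧) = if t = 0 then 1 else 1 + z := by
  rw [add_mul, one_mul, mul_assoc, map_add, coeff_C_mul, PowerSeries.coeff_mk]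
  rcases t with _ | t
  · simp
  · simp [coeff_succ_X_mul]

/-- The factor `(1 + z q^m) / (1 - q^m)` is the expansion `q ↦ q^m` of `(1 + z q) / (1 - q)`. -/
lemma coeff_one_add_C_mul_X_pow_mul_inv (z : K) {m : ℕ} (hm : m ≠ 0) (n : ℕ) :
    coeff n ((1 + C z * X ^ m) * (1 - X ^ m : K⟦X⟧)⁻¹) =
      if m ∣ n then (if n = 0 then 1 else 1 + z) else 0 := by
  have hinv : (1 - X ^ m : K⟦X⟧)⁻¹ = expand m hm (PowerSeries.mk 1) := by
    symm
    rw [PowerSeries.eq_inv_iff_mul_eq_one (by simp [hm]), ← expand_X m hm, ← map_one (expand m hm),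
      ← map_sub, ← map_mul, mk_one_mul_one_sub_eq_one, map_one]
  have hexp : (1 + C z * X ^ m) * expand m hm (PowerSeries.mk 1) =
      expand m hm ((1 + C z * X) * PowerSeries.mk 1) := by
    rw [map_mul, map_add, map_one, map_mul, expand_C, expand_X]
  rw [hinv, hexp, coeff_expand, coeff_one_add_C_mul_X_mul_mk_one]
  by_cases hdvd : m ∣ n
  · obtain ⟨c, rfl⟩ := hdvd
    simp [Nat.mul_div_cancel_left _ (Nat.pos_of_ne_zero hm), hm]
  · simp [hdvd]

lemma coeff_prod_one_add_C_mul_X_pow_mul_inv (z : K) (k N : ℕ) :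
    coeff N (∏ j ∈ range k, (1 + C z * X ^ (j + 1)) * (1 - X ^ (j + 1) : K⟦X⟧)⁻¹) =
      ∑ l ∈ multipleAntidiag k N, (1 + z) ^ #l.support := by
  rw [coeff_prod, multipleAntidiag, sum_filter]
  refine sum_congr rfl fun l hl => ?_
  simp only [coeff_one_add_C_mul_X_pow_mul_inv z (Nat.succ_ne_zero _)]
  rw [prod_ite_zero, prod_ite, prod_const_one, one_mul, prod_const]
  congr 3
  ext j
  simp only [mem_filter, Finsupp.mem_support_iff, and_iff_right_iff_imp]
  exact fun h => (mem_finsuppAntidiag.mp hl).2 (Finsupp.mem_support_iff.mpr h)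

end PowerSeries

theorem statement4 (k : ℕ) :
    (PowerSeries.mk fun n =>
        ∑ s ∈ Finset.range (n + 1), (bCount3 n k s : RatFunc ℚ) * RatFunc.X ^ s) =
      PowerSeries.X ^ (k ^ 2) *
        ∏ j ∈ Finset.range k,
          (1 + PowerSeries.C (RatFunc.X : RatFunc ℚ) * PowerSeries.X ^ (j + 1)) *
            (1 - PowerSeries.X ^ (j + 1) : PowerSeries (RatFunc ℚ))⁻¹ := by
  ext n
  rw [PowerSeries.coeff_mk, PowerSeries.coeff_X_pow_mul', sum_bCount3_mul_pow, sq]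
  split_ifs with h
  · rw [coeff_prod_one_add_C_mul_X_pow_mul_inv, sum_basisFinset_pow_sig _ h, sum_sigma]
    refine sum_congr rfl fun l _ => ?_
    simpa [add_comm] using sum_pow_mul_eq_add_pow (RatFunc.X : RatFunc ℚ) 1 l.support
  · refine sum_eq_zero fun π hπ => absurd ?_ h
    have := durfee_mul_self_le π
    rwa [(mem_filter.mp hπ).2.2] at this

end BasisPartitions
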